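/- arXiv:0907.4294 — 3 statements merged into one kernel-verified Lean document; each statement's English description precedes it below -/
import Mathlib

section
/- For a > 0, define for s, t ∈ ℝ: I₀(a,t) = [cosh(2a)·(3 − cosh²(2a))·cosh²(2t) + (cosh²(2a) − 1)·cosh(2t) − 2·cosh(2a)] / [(cosh(2a)·cosh(2t) + 1)²·(cosh(2a)·cosh(2t) − 1)^{3/2}], v₀(a,s) = cosh(2a)·sinh(2s)·(cosh(2a)·cosh(2s) − 1)^{−1/2}, f₀(a,s) = sinh²(2a)·cosh(2s)·(cosh²(2a)·cosh²(2s) − 1)^{−1}, and e₀(a,s) = f₀(a,s) − v₀(a,s)·∫₀^s I₀(a,t) dt. Then: (1) the integral E₀(a) = ∫₀^∞ I₀(a,t) dt converges; (2) if E₀(a) ≤ 0, then e₀(a,s) > 0 for every s ∈ ℝ; (3) if E₀(a) > 0, then e₀(a,·) has exactly one zero z(a) in (0, ∞) (and, being even, exactly the two zeros ±z(a) in ℝ). -/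
/-!
Put `c = cosh 2a > 1`. For `s ≠ 0` the field factors as `e₀ = v₀ · (f₀ / v₀ - ∫₀ˢ I₀)`, and a
direct computation gives `(f₀ / v₀)' = I₀ - 2 √(c cosh 2s - 1) / (c sinh² 2s)`, so the quotient
`e₀ / v₀` is strictly decreasing on `(0, ∞)`; since `f₀ / v₀ → 0` it decreases to `-E₀`.
With `v₀ > 0` on `(0, ∞)`, `e₀ 0 = 1` and `e₀` even, the sign of `E₀` decides everything: for
`E₀ ≤ 0` the quotient stays above `-E₀ ≥ 0`, for `E₀ > 0` it crosses zero exactly once.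
-/

open Real MeasureTheory Set Filter Topology

section EvenProduct

variable {e v g : ℝ → ℝ} {L : ℝ}

lemma StrictAntiOn.lt_of_tendsto_atTop {a : ℝ} (hg : StrictAntiOn g (Ioi a))
    (hL : Tendsto g atTop (𝓝 L)) {s : ℝ} (hs : a < s) : L < g s := by
  have hs1 : a < s + 1 := by linarith
  have hL_le : L ≤ g (s + 1) := le_of_tendsto hL <| by
    filter_upwards [eventually_gt_atTop (s + 1)] with t ht
    exact (hg hs1 (hs1.trans ht) ht).le
  exact hL_le.trans_lt (hg hs hs1 (lt_add_one s))

lemma pos_of_even_of_eq_mul_of_strictAntiOn (heven : ∀ s, e (-s) = e s) (h0 : 0 < e 0)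
    (hv : ∀ s, 0 < s → 0 < v s) (hfac : ∀ s, 0 < s → e s = v s * g s)
    (hg : StrictAntiOn g (Ioi 0)) (hL : Tendsto g atTop (𝓝 L)) (hL0 : 0 ≤ L) (s : ℝ) :
    0 < e s := by
  have hpos : ∀ s, 0 < s → 0 < e s := fun s hs =>
    hfac s hs ▸ mul_pos (hv s hs) (hL0.trans_lt (hg.lt_of_tendsto_atTop hL hs))
  rcases lt_trichotomy s 0 with hs | rfl | hs
  · simpa only [heven] using hpos (-s) (neg_pos.2 hs)
  · exact h0
  · exact hpos s hs

lemma exists_zeros_eq_pair_of_even_of_eq_mul_of_strictAntiOn (he : Continuous e)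
    (heven : ∀ s, e (-s) = e s) (h0 : 0 < e 0)
    (hv : ∀ s, 0 < s → 0 < v s) (hfac : ∀ s, 0 < s → e s = v s * g s)
    (hg : StrictAntiOn g (Ioi 0)) (hL : Tendsto g atTop (𝓝 L)) (hL0 : L < 0) :
    ∃ z, 0 < z ∧ e z = 0 ∧ (∀ s, 0 < s → e s = 0 → s = z) ∧ {s | e s = 0} = {-z, z} := by
  have hzero_iff : ∀ s, 0 < s → (e s = 0 ↔ g s = 0) := fun s hs => by
    rw [hfac s hs, mul_eq_zero, or_iff_right (hv s hs).ne']
  obtain ⟨S, hS, hgS⟩ :=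
    ((eventually_gt_atTop 0).and (hL.eventually_lt_const hL0)).exists
  have heS : e S < 0 := hfac S hS ▸ mul_neg_of_pos_of_neg (hv S hS) hgS
  obtain ⟨z, hzS, hz⟩ :=
    intermediate_value_Icc' hS.le he.continuousOn ⟨heS.le, h0.le⟩
  have hz0 : 0 < z := lt_of_le_of_ne hzS.1 (by rintro rfl; exact h0.ne' hz)
  have huniq : ∀ s, 0 < s → e s = 0 → s = z := fun s hs hes =>
    hg.injOn hs hz0 (((hzero_iff s hs).1 hes).trans ((hzero_iff z hz0).1 hz).symm)
  refine ⟨z, hz0, hz, huniq, Set.ext fun s => ?_⟩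
  simp only [mem_ofPred_eq, mem_insert_iff, mem_singleton_iff]
  constructor
  · intro hs
    rcases lt_trichotomy s 0 with hneg | rfl | hpos
    · exact Or.inl (neg_eq_iff_eq_neg.1 (huniq (-s) (neg_pos.2 hneg) ((heven s).trans hs)))
    · exact absurd hs h0.ne'
    · exact Or.inr (huniq s hpos hs)
  · rintro (rfl | rfl)
    · rwa [heven]
    · exact hz

end EvenProduct

lemma Real.rpow_three_halves {u : ℝ} (hu : 0 ≤ u) : u ^ ((3:ℝ)/2) = u * √u := by
  rw [show (3:ℝ)/2 = 1 + 1/2 by norm_num, rpow_add' hu (by norm_num), rpow_one, sqrt_eq_rpow]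

lemma Real.rpow_neg_half {u : ℝ} (hu : 0 ≤ u) : u ^ (-(1:ℝ)/2) = (√u)⁻¹ := by
  rw [neg_div, rpow_neg hu, sqrt_eq_rpow]

-- The catenoid enters only through `c = cosh 2a`; in `f₀`, `sinh² 2a = c² - 1`.
namespace HyperbolicCatenoid

variable {c : ℝ}

noncomputable def I₀ (c t : ℝ) : ℝ :=
  (c * (3 - c ^ 2) * cosh (2*t) ^ 2 + (c ^ 2 - 1) * cosh (2*t) - 2 * c)
    / ((c * cosh (2*t) + 1) ^ 2 * (c * cosh (2*t) - 1) ^ ((3:ℝ)/2))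

noncomputable def v₀ (c s : ℝ) : ℝ :=
  c * sinh (2*s) * (c * cosh (2*s) - 1) ^ (-(1:ℝ)/2)

noncomputable def f₀ (c s : ℝ) : ℝ :=
  (c ^ 2 - 1) * cosh (2*s) * (c ^ 2 * cosh (2*s) ^ 2 - 1)⁻¹

noncomputable def e₀ (c s : ℝ) : ℝ :=
  f₀ c s - v₀ c s * ∫ t in (0:ℝ)..s, I₀ c t

noncomputable def fOverV (c s : ℝ) : ℝ :=
  (c ^ 2 - 1) * cosh (2*s) * √(c * cosh (2*s) - 1) / (c * sinh (2*s) * (c ^ 2 * cosh (2*s) ^ 2 - 1))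

noncomputable def eOverV (c s : ℝ) : ℝ :=
  fOverV c s - ∫ t in (0:ℝ)..s, I₀ c t

lemma one_lt_mul_cosh (hc : 1 < c) (x : ℝ) : 1 < c * cosh x := by
  nlinarith [one_le_cosh x]

lemma I₀_eq (hc : 1 < c) (t : ℝ) : I₀ c t =
    (c * (3 - c ^ 2) * cosh (2*t) ^ 2 + (c ^ 2 - 1) * cosh (2*t) - 2 * c)
      / ((c * cosh (2*t) + 1) ^ 2 * ((c * cosh (2*t) - 1) * √(c * cosh (2*t) - 1))) := by
  rw [I₀, rpow_three_halves (by linarith [one_lt_mul_cosh hc (2*t)])]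

lemma v₀_eq (hc : 1 < c) (s : ℝ) : v₀ c s = c * sinh (2*s) / √(c * cosh (2*s) - 1) := by
  rw [v₀, rpow_neg_half (by linarith [one_lt_mul_cosh hc (2*s)]), div_eq_mul_inv]

lemma I₀_neg (c t : ℝ) : I₀ c (-t) = I₀ c t := by
  simp only [I₀, mul_neg, cosh_neg]

lemma continuous_I₀ (hc : 1 < c) : Continuous (I₀ c) := by
  have hu : ∀ t, 0 < c * cosh (2*t) - 1 := fun t => by linarith [one_lt_mul_cosh hc (2*t)]
  refine Continuous.div (by fun_prop) ?_ fun t => by have := hu t; positivity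
  exact (by fun_prop : Continuous fun t => (c * cosh (2*t) + 1) ^ 2).mul
    ((by fun_prop : Continuous fun t => c * cosh (2*t) - 1).rpow_const fun t => Or.inl (hu t).ne')

lemma continuous_e₀ (hc : 1 < c) : Continuous (e₀ c) := by
  have hu : ∀ s, 0 < c * cosh (2*s) - 1 := fun s => by linarith [one_lt_mul_cosh hc (2*s)]
  have hq : ∀ s, c ^ 2 * cosh (2*s) ^ 2 - 1 ≠ 0 := fun s => by
    nlinarith [one_lt_mul_cosh hc (2*s)]
  have hf : Continuous (f₀ c) :=
    (by fun_prop : Continuous fun s => (c ^ 2 - 1) * cosh (2*s)).mul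
      ((by fun_prop : Continuous fun s => c ^ 2 * cosh (2*s) ^ 2 - 1).inv₀ hq)
  have hv : Continuous (v₀ c) :=
    (by fun_prop : Continuous fun s => c * sinh (2*s)).mul
      ((by fun_prop : Continuous fun s => c * cosh (2*s) - 1).rpow_const fun s => Or.inl (hu s).ne')
  have hJ : Continuous fun s => ∫ t in (0:ℝ)..s, I₀ c t :=
    (intervalIntegral.differentiable_integral_of_continuous (continuous_I₀ hc)).continuous
  exact hf.sub (hv.mul hJ)

lemma e₀_neg (c s : ℝ) : e₀ c (-s) = e₀ c s := by
  have hJ : ∫ t in (0:ℝ)..(-s), I₀ c t = -∫ t in (0:ℝ)..s, I₀ c t := by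
    rw [intervalIntegral.integral_symm, ← neg_zero, ← intervalIntegral.integral_comp_neg]
    simp only [I₀_neg, neg_zero]
  simp only [e₀, f₀, v₀, hJ, mul_neg, cosh_neg, sinh_neg]
  ring

lemma e₀_zero (hc : 1 < c) : e₀ c 0 = 1 := by
  have : c ^ 2 - 1 ≠ 0 := by nlinarith
  simp [e₀, f₀, this]

lemma abs_I₀_le (hc : 1 < c) (t : ℝ) :
    |I₀ c t| ≤ (c ^ 3 + c ^ 2 + 5 * c) / (c ^ 2 * ((c - 1) * √(c - 1))) / cosh (2*t) := by
  rw [I₀_eq hc]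
  set X := cosh (2*t)
  have hX : 1 ≤ X := one_le_cosh _
  have hc1 : 0 < c - 1 := by linarith
  have hu : 0 < c * X - 1 := by linarith [one_lt_mul_cosh hc (2*t)]
  have hnum :
      |c * (3 - c ^ 2) * X ^ 2 + (c ^ 2 - 1) * X - 2 * c| ≤ (c ^ 3 + c ^ 2 + 5 * c) * X ^ 2 := by
    rw [abs_le]
    constructor <;> nlinarith [mul_le_mul_of_nonneg_left hX hc1.le, mul_pos hc1 hu]
  have hden : c ^ 2 * ((c - 1) * √(c - 1)) * X ^ 3 ≤
      (c * X + 1) ^ 2 * ((c * X - 1) * √(c * X - 1)) := by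
    have hlin : (c - 1) * X ≤ c * X - 1 := by linarith
    have hsqrt : √(c - 1) ≤ √(c * X - 1) := sqrt_le_sqrt (by nlinarith)
    calc c ^ 2 * ((c - 1) * √(c - 1)) * X ^ 3 = (c * X) ^ 2 * (((c - 1) * X) * √(c - 1)) := by ring
      _ ≤ (c * X + 1) ^ 2 * ((c * X - 1) * √(c * X - 1)) := by gcongr; nlinarith
  have hK : 0 < c ^ 2 * ((c - 1) * √(c - 1)) := by positivity
  have hD : 0 < (c * X + 1) ^ 2 * ((c * X - 1) * √(c * X - 1)) :=
    mul_pos (pow_pos (by linarith) 2) (mul_pos hu (sqrt_pos.2 hu))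
  rw [abs_div, abs_of_pos hD, div_div, div_le_div_iff₀ hD (mul_pos hK (by linarith))]
  calc |c * (3 - c ^ 2) * X ^ 2 + (c ^ 2 - 1) * X - 2 * c| * (c ^ 2 * ((c - 1) * √(c - 1)) * X)
      ≤ (c ^ 3 + c ^ 2 + 5 * c) * X ^ 2 * (c ^ 2 * ((c - 1) * √(c - 1)) * X) := by gcongr
    _ = (c ^ 3 + c ^ 2 + 5 * c) * (c ^ 2 * ((c - 1) * √(c - 1)) * X ^ 3) := by ring
    _ ≤ (c ^ 3 + c ^ 2 + 5 * c) * ((c * X + 1) ^ 2 * ((c * X - 1) * √(c * X - 1))) := by gcongr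

lemma inv_cosh_le_two_mul_exp_neg (x : ℝ) : (cosh x)⁻¹ ≤ 2 * exp (-x) := by
  rw [cosh_eq, inv_le_iff_one_le_mul₀ (by positivity), exp_neg]
  field_simp
  nlinarith [exp_pos x, exp_pos (-x)]

lemma integrableOn_I₀ (hc : 1 < c) : IntegrableOn (I₀ c) (Ioi 0) := by
  refine integrable_of_isBigO_exp_neg two_pos (continuous_I₀ hc).continuousOn ?_
  have hc1 : 0 < c - 1 := by linarith
  set K := (c ^ 3 + c ^ 2 + 5 * c) / (c ^ 2 * ((c - 1) * √(c - 1)))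
  have hK : 0 ≤ K := by positivity
  refine Asymptotics.IsBigO.of_bound (K * 2) (Eventually.of_forall fun t => ?_)
  rw [norm_of_nonneg (exp_pos _).le, Real.norm_eq_abs, mul_assoc, neg_mul]
  calc |I₀ c t| ≤ K * (cosh (2*t))⁻¹ := abs_I₀_le hc t
    _ ≤ K * (2 * exp (-(2*t))) := by gcongr; exact inv_cosh_le_two_mul_exp_neg _

lemma f₀_eq_v₀_mul_fOverV (hc : 1 < c) {s : ℝ} (hs : s ≠ 0) : f₀ c s = v₀ c s * fOverV c s := by
  have hu : 0 < c * cosh (2*s) - 1 := by linarith [one_lt_mul_cosh hc (2*s)]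
  have hS : sinh (2*s) ≠ 0 := by simpa using hs
  have hq : c ^ 2 * cosh (2*s) ^ 2 - 1 ≠ 0 := by nlinarith [one_lt_mul_cosh hc (2*s)]
  have hr : √(c * cosh (2*s) - 1) ≠ 0 := (sqrt_pos.2 hu).ne'
  rw [f₀, v₀_eq hc, fOverV]
  field_simp

lemma e₀_eq_v₀_mul_eOverV (hc : 1 < c) {s : ℝ} (hs : s ≠ 0) : e₀ c s = v₀ c s * eOverV c s := by
  rw [e₀, eOverV, f₀_eq_v₀_mul_fOverV hc hs, mul_sub]

lemma v₀_pos (hc : 1 < c) {s : ℝ} (hs : 0 < s) : 0 < v₀ c s := by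
  have hu : 0 < c * cosh (2*s) - 1 := by linarith [one_lt_mul_cosh hc (2*s)]
  have hS : 0 < sinh (2*s) := sinh_pos_iff.2 (by linarith)
  rw [v₀_eq hc]
  exact div_pos (mul_pos (by linarith) hS) (sqrt_pos.2 hu)

lemma fOverV_pos (hc : 1 < c) {s : ℝ} (hs : 0 < s) : 0 < fOverV c s := by
  have hu : 0 < c * cosh (2*s) - 1 := by linarith [one_lt_mul_cosh hc (2*s)]
  have hS : 0 < sinh (2*s) := sinh_pos_iff.2 (by linarith)
  have hq : 0 < c ^ 2 * cosh (2*s) ^ 2 - 1 := by nlinarith [one_lt_mul_cosh hc (2*s)]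
  have hc2 : 0 < c ^ 2 - 1 := by nlinarith
  have hr := sqrt_pos.2 hu
  have hX := cosh_pos (2*s)
  have hc0 : 0 < c := by linarith
  unfold fOverV
  positivity

lemma fOverV_le_inv_sinh (hc : 1 < c) {s : ℝ} (hs : 0 < s) : fOverV c s ≤ (sinh (2*s))⁻¹ := by
  set X := cosh (2*s)
  have hX : 1 ≤ X := one_le_cosh _
  have hu : 0 < c * X - 1 := by linarith [one_lt_mul_cosh hc (2*s)]
  have hS : 0 < sinh (2*s) := sinh_pos_iff.2 (by linarith)
  have hq : 0 < c ^ 2 * X ^ 2 - 1 := by nlinarith [one_lt_mul_cosh hc (2*s)]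
  have hc0 : 0 < c := by linarith
  have hsqrt : √(c * X - 1) ≤ c * X := by
    rw [sqrt_le_left (by positivity)]; nlinarith
  rw [fOverV, ← one_div, div_le_div_iff₀ (by positivity) hS]
  calc (c ^ 2 - 1) * X * √(c * X - 1) * sinh (2*s)
      ≤ (c ^ 2 - 1) * X * (c * X) * sinh (2*s) := by gcongr; nlinarith
    _ ≤ 1 * (c * sinh (2*s) * (c ^ 2 * X ^ 2 - 1)) := by
        nlinarith [mul_nonneg (mul_pos hc0 hS).le (show 0 ≤ X ^ 2 - 1 by nlinarith)]

lemma tendsto_fOverV_atTop (hc : 1 < c) : Tendsto (fOverV c) atTop (𝓝 0) := by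
  have hsinh : Tendsto (fun s : ℝ => sinh (2*s)) atTop atTop :=
    tendsto_atTop_mono' _ (by
      filter_upwards [eventually_ge_atTop 0] with s hs using self_le_sinh_iff.2 (by simpa using hs))
      (tendsto_id.const_mul_atTop two_pos)
  refine tendsto_of_tendsto_of_tendsto_of_le_of_le' tendsto_const_nhds
    (tendsto_inv_atTop_zero.comp hsinh) ?_ ?_
  · filter_upwards [eventually_gt_atTop 0] with s hs using (fOverV_pos hc hs).le
  · filter_upwards [eventually_gt_atTop 0] with s hs using fOverV_le_inv_sinh hc hs

lemma tendsto_eOverV_atTop (hc : 1 < c) :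
    Tendsto (eOverV c) atTop (𝓝 (-∫ t in Ioi 0, I₀ c t)) := by
  have hJ := intervalIntegral_tendsto_integral_Ioi 0 (integrableOn_I₀ hc) tendsto_id
  have h := (tendsto_fOverV_atTop hc).sub hJ
  rwa [zero_sub] at h

lemma hasDerivAt_fOverV (hc : 1 < c) {s : ℝ} (hs : s ≠ 0) :
    HasDerivAt (fOverV c) (I₀ c s - 2 * √(c * cosh (2*s) - 1) / (c * sinh (2*s) ^ 2)) s := by
  have hu : 0 < c * cosh (2*s) - 1 := by linarith [one_lt_mul_cosh hc (2*s)]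
  have hS : sinh (2*s) ≠ 0 := by simpa using hs
  have hq : c ^ 2 * cosh (2*s) ^ 2 - 1 ≠ 0 := by nlinarith [one_lt_mul_cosh hc (2*s)]
  have hp : c * cosh (2*s) + 1 ≠ 0 := by nlinarith [one_lt_mul_cosh hc (2*s)]
  have hc0 : c ≠ 0 := by positivity
  have hr : √(c * cosh (2*s) - 1) ≠ 0 := (sqrt_pos.2 hu).ne'
  have h2 : HasDerivAt (fun s : ℝ => 2 * s) 2 s := by simpa using (hasDerivAt_id s).const_mul 2
  have hX := h2.cosh
  have hSd := h2.sinh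
  have hnum := (hX.const_mul (c ^ 2 - 1)).mul (((hX.const_mul c).sub_const 1).sqrt hu.ne')
  have hden := (hSd.const_mul c).mul (((hX.pow 2).const_mul (c ^ 2)).sub_const 1)
  refine (hnum.div hden (mul_ne_zero (mul_ne_zero hc0 hS) hq)).congr_deriv ?_
  simp only [Pi.mul_apply, Pi.pow_apply]
  rw [I₀_eq hc]
  field_simp
  rw [sq_sqrt hu.le, sinh_sq]
  ring

lemma hasDerivAt_eOverV (hc : 1 < c) {s : ℝ} (hs : s ≠ 0) :
    HasDerivAt (eOverV c) (-(2 * √(c * cosh (2*s) - 1) / (c * sinh (2*s) ^ 2))) s := by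
  have hJ := ((continuous_I₀ hc).integral_hasStrictDerivAt 0 s).hasDerivAt
  exact ((hasDerivAt_fOverV hc hs).sub hJ).congr_deriv (by ring)

lemma strictAntiOn_eOverV (hc : 1 < c) : StrictAntiOn (eOverV c) (Ioi 0) := by
  refine strictAntiOn_of_deriv_neg (convex_Ioi 0)
    (fun s hs => (hasDerivAt_eOverV hc (ne_of_gt hs)).continuousAt.continuousWithinAt)
    fun s hs => ?_
  rw [interior_Ioi] at hs
  have hu : 0 < c * cosh (2*s) - 1 := by linarith [one_lt_mul_cosh hc (2*s)]
  have hS : 0 < sinh (2*s) := sinh_pos_iff.2 (by linarith [mem_Ioi.1 hs])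
  have : 0 < c := by linarith
  rw [(hasDerivAt_eOverV hc (ne_of_gt hs)).deriv, neg_neg_iff_pos]
  exact div_pos (mul_pos two_pos (sqrt_pos.2 hu)) (by positivity)

end HyperbolicCatenoid

open HyperbolicCatenoid in
/-- Stability dichotomy for the minimal catenoids `𝒞_{0,a}` in `ℍ³`: `E₀(a) = ∫₀^∞ I₀(a,t) dt`
converges; if `E₀(a) ≤ 0` the variation Jacobi field `e₀(a,·)` is everywhere positive
(stable catenoid); if `E₀(a) > 0` it has exactly one zero `z(a)` in `(0,∞)` and its zero set
is `{−z(a), z(a)}` (index-one catenoid). -/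
theorem stmt16 (a : ℝ) (ha : 0 < a)
    (I₀ v₀ f₀ e₀ : ℝ → ℝ)
    (hI₀ : ∀ t, I₀ t =
      (Real.cosh (2*a) * (3 - Real.cosh (2*a) ^ 2) * Real.cosh (2*t) ^ 2
        + (Real.cosh (2*a) ^ 2 - 1) * Real.cosh (2*t) - 2 * Real.cosh (2*a))
      / ((Real.cosh (2*a) * Real.cosh (2*t) + 1) ^ 2
          * (Real.cosh (2*a) * Real.cosh (2*t) - 1) ^ ((3:ℝ)/2)))
    (hv₀ : ∀ s, v₀ s = Real.cosh (2*a) * Real.sinh (2*s)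
      * (Real.cosh (2*a) * Real.cosh (2*s) - 1) ^ (-(1:ℝ)/2))
    (hf₀ : ∀ s, f₀ s = Real.sinh (2*a) ^ 2 * Real.cosh (2*s)
      * (Real.cosh (2*a) ^ 2 * Real.cosh (2*s) ^ 2 - 1)⁻¹)
    (he₀ : ∀ s, e₀ s = f₀ s - v₀ s * ∫ t in (0:ℝ)..s, I₀ t)
    (E₀ : ℝ) (hE₀ : E₀ = ∫ t in Set.Ioi (0:ℝ), I₀ t) :
    MeasureTheory.IntegrableOn I₀ (Set.Ioi 0) ∧
    (E₀ ≤ 0 → ∀ s, 0 < e₀ s) ∧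
    (0 < E₀ → ∃ z : ℝ, 0 < z ∧ e₀ z = 0 ∧ (∀ s, 0 < s → e₀ s = 0 → s = z) ∧
      {s : ℝ | e₀ s = 0} = {-z, z}) := by
  set c := cosh (2*a)
  have hc : 1 < c := one_lt_cosh.2 (by positivity)
  obtain rfl : I₀ = HyperbolicCatenoid.I₀ c := funext hI₀
  obtain rfl : v₀ = HyperbolicCatenoid.v₀ c := funext hv₀
  obtain rfl : f₀ = HyperbolicCatenoid.f₀ c := funext fun s => by rw [hf₀, sinh_sq]; rfl
  obtain rfl : e₀ = HyperbolicCatenoid.e₀ c := funext he₀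
  subst hE₀
  have hfac : ∀ s, 0 < s → HyperbolicCatenoid.e₀ c s = HyperbolicCatenoid.v₀ c s * eOverV c s :=
    fun s hs => e₀_eq_v₀_mul_eOverV hc hs.ne'
  have he0 : 0 < HyperbolicCatenoid.e₀ c 0 := by rw [e₀_zero hc]; exact one_pos
  refine ⟨integrableOn_I₀ hc, fun hE => ?_, fun hE => ?_⟩
  · exact pos_of_even_of_eq_mul_of_strictAntiOn (e₀_neg c) he0 (fun _ => v₀_pos hc) hfac
      (strictAntiOn_eOverV hc) (tendsto_eOverV_atTop hc) (neg_nonneg.2 hE)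
  · exact exists_zeros_eq_pair_of_even_of_eq_mul_of_strictAntiOn (continuous_e₀ hc) (e₀_neg c)
      he0 (fun _ => v₀_pos hc) hfac (strictAntiOn_eOverV hc) (tendsto_eOverV_atTop hc)
      (neg_neg_iff_pos.2 hE)
end

section
/- For a > 0 and t > a, let λ₀(a,t) = sinh(2a)·∫_a^t (cosh τ)^{−1}·(sinh²(2τ) − sinh²(2a))^{−1/2} dτ. Then: (1) for each a > 0 the improper integral defining λ₀(a,t) converges for all t > a, and the limit V₀(a) = lim_{t→∞} λ₀(a,t) exists and is finite; (2) for 0 < a₁ < a₂, the function w(t) = λ₀(a₂,t) − λ₀(a₁,t) on [a₂, ∞) is strictly increasing, satisfies w(a₂) = −λ₀(a₁,a₂) < 0 and lim_{t→∞} w(t) = V₀(a₂) − V₀(a₁); (3) consequently w has at most one zero in (a₂, ∞), and it has a zero if and only if V₀(a₂) > V₀(a₁). -/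
open Real MeasureTheory Set Filter Topology

/-! The integrand `(cosh τ)⁻¹ (sinh² 2τ - sinh² 2a)^(-1/2)` is dominated by a multiple of the
shifted `Γ(1/2)` integrand `exp (-(τ - a)) (τ - a)^(-1/2)`, since `sinh² 2τ - sinh² 2a` grows at
least linearly in `τ - a` and `cosh τ ≥ exp τ / 2`; this gives the convergence of `λ₀` and `V₀`.
Writing `S = sinh 2τ`, the weight `sinh 2a (S² - sinh² 2a)^(-1/2) = (S² / sinh² 2a - 1)^(-1/2)`
increases with `a`, so `w(t) - w(s)`, an integral over `[s, t] ⊆ [a₂, ∞)` of the difference of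
the weighted integrands, is positive for `s < t`. Being continuous, negative at `a₂` and increasing to
`V₀(a₂) - V₀(a₁)`, `w` vanishes exactly once or never, according to the sign of that limit. -/

theorem StrictMonoOn.exists_eq_zero_iff_pos {f : ℝ → ℝ} {c L : ℝ}
    (hf : StrictMonoOn f (Ici c)) (hcont : ContinuousOn f (Ici c)) (hc : f c < 0)
    (hL : Tendsto f atTop (𝓝 L)) : (∃ t ∈ Ioi c, f t = 0) ↔ 0 < L := by
  constructor
  · rintro ⟨t, ht, hft⟩
    have hct : c ≤ t := le_of_lt ht
    have hstep : f t < f (t + 1) := hf hct (show c ≤ t + 1 by linarith) (lt_add_one t)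
    have hbound : f (t + 1) ≤ L := ge_of_tendsto hL <| (eventually_ge_atTop (t + 1)).mono
      fun s hs => hf.monotoneOn (show c ≤ t + 1 by linarith) (show c ≤ s by linarith) hs
    linarith
  · intro hL0
    obtain ⟨b, hcb, hb⟩ :=
      ((eventually_ge_atTop c).and (hL.eventually (eventually_gt_nhds hL0))).exists
    obtain ⟨t, ht, hft⟩ :=
      intermediate_value_Ioo hcb (hcont.mono Icc_subset_Ici_self) ⟨hc, hb⟩
    exact ⟨t, ht.1, hft⟩

lemma sq_sinh_lt_sq_sinh {x y : ℝ} (hx : 0 ≤ x) (hxy : x < y) : sinh x ^ 2 < sinh y ^ 2 :=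
  pow_lt_pow_left₀ (sinh_lt_sinh.2 hxy) (sinh_nonneg_iff.2 hx) two_ne_zero

lemma two_mul_sinh_mul_sub_le_sq_sinh_sub_sq_sinh {x y : ℝ} (hx : 0 ≤ x) (hxy : x ≤ y) :
    2 * sinh x * (y - x) ≤ sinh y ^ 2 - sinh x ^ 2 := by
  have hdiff : y - x ≤ sinh y - sinh x := by
    linarith [sinh_sub_id_strictMono.monotone hxy]
  have hsum : 2 * sinh x ≤ sinh y + sinh x := by linarith [sinh_le_sinh.2 hxy]
  calc 2 * sinh x * (y - x) ≤ (sinh y + sinh x) * (sinh y - sinh x) :=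
        mul_le_mul hsum hdiff (by linarith) (by linarith [sinh_nonneg_iff.2 hx])
    _ = sinh y ^ 2 - sinh x ^ 2 := by ring

lemma inv_cosh_le_two_mul_exp_neg (x : ℝ) : (cosh x)⁻¹ ≤ 2 * exp (-x) := by
  have hcosh : exp x / 2 ≤ cosh x := by rw [cosh_eq]; linarith [exp_pos (-x)]
  calc (cosh x)⁻¹ ≤ (exp x / 2)⁻¹ := inv_anti₀ (by positivity) hcosh
    _ = 2 * exp (-x) := by rw [exp_neg]; field_simp

noncomputable def catenaryIntegrand (a τ : ℝ) : ℝ :=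
  (cosh τ)⁻¹ * (sinh (2 * τ) ^ 2 - sinh (2 * a) ^ 2) ^ (-(1 : ℝ) / 2)

/-- `λ₀(a, t)`; `catenaryHeight a` below is `V₀(a)`. -/
noncomputable def catenaryLambda (a t : ℝ) : ℝ :=
  sinh (2 * a) * ∫ τ in a..t, catenaryIntegrand a τ

noncomputable def catenaryHeight (a : ℝ) : ℝ :=
  sinh (2 * a) * ∫ τ in Ioi a, catenaryIntegrand a τ

section

variable {a τ : ℝ}

lemma catenaryIntegrand_pos (ha : 0 ≤ a) (hτ : a < τ) : 0 < catenaryIntegrand a τ :=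
  mul_pos (inv_pos.2 (cosh_pos τ)) <|
    rpow_pos_of_pos (sub_pos.2 (sq_sinh_lt_sq_sinh (by linarith) (by linarith))) _

lemma catenaryIntegrand_le (ha : 0 < a) (hτ : a < τ) :
    catenaryIntegrand a τ ≤ 2 * exp (-a) * (4 * sinh (2 * a)) ^ (-(1 : ℝ) / 2) *
      (exp (-(τ - a)) * (τ - a) ^ (-(1 : ℝ) / 2)) := by
  have hs : 0 < sinh (2 * a) := sinh_pos_iff.2 (by linarith)
  have hlow : 0 < 2 * sinh (2 * a) * (2 * τ - 2 * a) := by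
    have : 0 < 2 * τ - 2 * a := by linarith
    positivity
  have hD := two_mul_sinh_mul_sub_le_sq_sinh_sub_sq_sinh (x := 2 * a) (y := 2 * τ)
    (by linarith) (by linarith)
  calc catenaryIntegrand a τ
      ≤ 2 * exp (-τ) * (2 * sinh (2 * a) * (2 * τ - 2 * a)) ^ (-(1 : ℝ) / 2) :=
        mul_le_mul (inv_cosh_le_two_mul_exp_neg τ)
          (rpow_le_rpow_of_nonpos hlow hD (by norm_num)) (rpow_nonneg (hlow.le.trans hD) _)
          (by positivity)
    _ = _ := by
        rw [show 2 * sinh (2 * a) * (2 * τ - 2 * a) = 4 * sinh (2 * a) * (τ - a) by ring,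
          mul_rpow (by linarith) (by linarith), show -τ = -a + -(τ - a) by ring, exp_add]
        ring

lemma integrableOn_Ioi_catenaryIntegrand (ha : 0 < a) :
    IntegrableOn (catenaryIntegrand a) (Ioi a) := by
  have hgamma : IntegrableOn (fun τ => exp (-(τ - a)) * (τ - a) ^ (-(1 : ℝ) / 2)) (Ioi a) := by
    have h := (GammaIntegral_convergent one_half_pos)
    rw [← ((measurePreserving_sub_right volume a).integrableOn_comp_preimage
      (measurableEmbedding_subRight a))] at h
    convert h using 2 with τ
    · norm_num
    · ext τ; simp
  refine (hgamma.const_mul (2 * exp (-a) * (4 * sinh (2 * a)) ^ (-(1 : ℝ) / 2))).mono'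
    (by unfold catenaryIntegrand; fun_prop : Measurable _).aestronglyMeasurable
    ((ae_restrict_iff' measurableSet_Ioi).2 (ae_of_all _ fun τ hτ => ?_))
  rw [Real.norm_of_nonneg (catenaryIntegrand_pos ha.le hτ).le]
  exact catenaryIntegrand_le ha hτ

lemma intervalIntegrable_catenaryIntegrand {s t : ℝ} (ha : 0 < a) (hs : a ≤ s) (ht : a ≤ t) :
    IntervalIntegrable (catenaryIntegrand a) volume s t :=
  intervalIntegrable_iff.2 <| (integrableOn_Ioi_catenaryIntegrand ha).mono_set
    fun _ hx => (le_min hs ht).trans_lt hx.1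

lemma sinh_mul_catenaryIntegrand_lt {a₁ a₂ : ℝ} (h₁ : 0 ≤ a₁) (h₁₂ : a₁ < a₂) (hτ : a₂ < τ) :
    sinh (2 * a₁) * catenaryIntegrand a₁ τ < sinh (2 * a₂) * catenaryIntegrand a₂ τ := by
  have hsinh : sinh (2 * a₁) < sinh (2 * a₂) := sinh_lt_sinh.2 (by linarith)
  have hD₂ : 0 < sinh (2 * τ) ^ 2 - sinh (2 * a₂) ^ 2 :=
    sub_pos.2 (sq_sinh_lt_sq_sinh (by linarith) (by linarith))
  have hD : sinh (2 * τ) ^ 2 - sinh (2 * a₂) ^ 2 < sinh (2 * τ) ^ 2 - sinh (2 * a₁) ^ 2 := by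
    linarith [sq_sinh_lt_sq_sinh (by linarith : 0 ≤ 2 * a₁) (by linarith : 2 * a₁ < 2 * a₂)]
  have key : sinh (2 * a₁) * (sinh (2 * τ) ^ 2 - sinh (2 * a₁) ^ 2) ^ (-(1 : ℝ) / 2)
      < sinh (2 * a₂) * (sinh (2 * τ) ^ 2 - sinh (2 * a₂) ^ 2) ^ (-(1 : ℝ) / 2) :=
    mul_lt_mul'' hsinh (rpow_lt_rpow_of_neg hD₂ hD (by norm_num))
      (sinh_nonneg_iff.2 (by linarith)) (rpow_nonneg (hD₂.trans hD).le _)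
  unfold catenaryIntegrand
  linear_combination (cosh τ)⁻¹ * key

lemma tendsto_catenaryLambda_atTop (ha : 0 < a) :
    Tendsto (catenaryLambda a) atTop (𝓝 (catenaryHeight a)) :=
  (intervalIntegral_tendsto_integral_Ioi a (integrableOn_Ioi_catenaryIntegrand ha)
    tendsto_id).const_mul _

lemma catenaryLambda_pos {t : ℝ} (ha : 0 < a) (ht : a < t) : 0 < catenaryLambda a t :=
  mul_pos (sinh_pos_iff.2 (by linarith)) <|
    intervalIntegral.intervalIntegral_pos_of_pos_on
      (intervalIntegrable_catenaryIntegrand ha le_rfl ht.le)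
      (fun _ hτ => catenaryIntegrand_pos ha.le hτ.1) ht

lemma catenaryLambda_sub_catenaryLambda {s t : ℝ} (ha : 0 < a) (hs : a ≤ s) (ht : a ≤ t) :
    catenaryLambda a t - catenaryLambda a s =
      ∫ τ in s..t, sinh (2 * a) * catenaryIntegrand a τ := by
  rw [catenaryLambda, catenaryLambda, intervalIntegral.integral_const_mul, ← mul_sub,
    intervalIntegral.integral_interval_sub_left (intervalIntegrable_catenaryIntegrand ha le_rfl ht)
      (intervalIntegrable_catenaryIntegrand ha le_rfl hs)]

lemma continuousOn_catenaryLambda (ha : 0 < a) : ContinuousOn (catenaryLambda a) (Ici a) := by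
  intro t (hat : a ≤ t)
  have hle : a ≤ t + 1 := by linarith
  have hIcc : ContinuousOn (fun s => ∫ τ in a..s, catenaryIntegrand a τ) (Icc a (t + 1)) := by
    simpa only [uIcc_of_le hle] using intervalIntegral.continuousOn_primitive_interval'
      (intervalIntegrable_catenaryIntegrand ha le_rfl hle) left_mem_uIcc
  have hnhds : Icc a (t + 1) ∈ 𝓝[Ici a] t :=
    mem_of_superset (inter_mem_nhdsWithin _ (Iio_mem_nhds (lt_add_one t)))
      fun s hs => ⟨hs.1, hs.2.le⟩
  exact ((hIcc t ⟨hat, by linarith⟩).const_mul _).mono_of_mem_nhdsWithin hnhds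

lemma strictMonoOn_catenaryLambda_sub {a₁ a₂ : ℝ} (h₁ : 0 < a₁) (h₁₂ : a₁ < a₂) :
    StrictMonoOn (fun t => catenaryLambda a₂ t - catenaryLambda a₁ t) (Ici a₂) := by
  intro s hs t ht hst
  have h₂ : 0 < a₂ := h₁.trans h₁₂
  have hint : ∀ {b}, 0 < b → b ≤ a₂ →
      IntervalIntegrable (fun τ => sinh (2 * b) * catenaryIntegrand b τ) volume s t :=
    fun hb hba =>
      (intervalIntegrable_catenaryIntegrand hb (hba.trans hs) (hba.trans ht)).const_mul _
  have hpos : 0 < ∫ τ in s..t,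
      (sinh (2 * a₂) * catenaryIntegrand a₂ τ - sinh (2 * a₁) * catenaryIntegrand a₁ τ) :=
    intervalIntegral.intervalIntegral_pos_of_pos_on ((hint h₂ le_rfl).sub (hint h₁ h₁₂.le))
      (fun τ hτ => sub_pos.2 (sinh_mul_catenaryIntegrand_lt h₁.le h₁₂ (lt_of_le_of_lt hs hτ.1)))
      hst
  rw [intervalIntegral.integral_sub (hint h₂ le_rfl) (hint h₁ h₁₂.le),
    ← catenaryLambda_sub_catenaryLambda h₂ hs ht,
    ← catenaryLambda_sub_catenaryLambda h₁ (h₁₂.le.trans hs) (h₁₂.le.trans ht)] at hpos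
  dsimp only
  linarith

end

/-- Intersection of catenaries generating minimal catenoids in `ℍ³`: the integrals defining
`λ₀(a,t)` and the height `V₀(a)` converge; for `0 < a₁ < a₂` the difference
`w(t) = λ₀(a₂,t) − λ₀(a₁,t)` is strictly increasing on `[a₂,∞)`, starts at the negative
value `−λ₀(a₁,a₂)`, tends to `V₀(a₂) − V₀(a₁)`, hence has at most one zero in `(a₂,∞)`,
and has one iff `V₀(a₂) > V₀(a₁)`. -/
theorem stmt17
    (lam : ℝ → ℝ → ℝ) (V : ℝ → ℝ)
    (hlam : ∀ a t, lam a t = Real.sinh (2*a) * ∫ τ in a..t,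
      (Real.cosh τ)⁻¹ * (Real.sinh (2*τ) ^ 2 - Real.sinh (2*a) ^ 2) ^ (-(1:ℝ)/2))
    (hV : ∀ a, V a = Real.sinh (2*a) * ∫ τ in Set.Ioi a,
      (Real.cosh τ)⁻¹ * (Real.sinh (2*τ) ^ 2 - Real.sinh (2*a) ^ 2) ^ (-(1:ℝ)/2)) :
    (∀ a : ℝ, 0 < a →
      (∀ t : ℝ, a < t → MeasureTheory.IntegrableOn
        (fun τ => (Real.cosh τ)⁻¹ *
          (Real.sinh (2*τ) ^ 2 - Real.sinh (2*a) ^ 2) ^ (-(1:ℝ)/2)) (Set.Ioc a t)) ∧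
      MeasureTheory.IntegrableOn
        (fun τ => (Real.cosh τ)⁻¹ *
          (Real.sinh (2*τ) ^ 2 - Real.sinh (2*a) ^ 2) ^ (-(1:ℝ)/2)) (Set.Ioi a) ∧
      Filter.Tendsto (lam a) Filter.atTop (nhds (V a))) ∧
    (∀ a₁ a₂ : ℝ, 0 < a₁ → a₁ < a₂ →
      StrictMonoOn (fun t => lam a₂ t - lam a₁ t) (Set.Ici a₂) ∧
      lam a₂ a₂ - lam a₁ a₂ = -lam a₁ a₂ ∧ 0 < lam a₁ a₂ ∧
      Filter.Tendsto (fun t => lam a₂ t - lam a₁ t) Filter.atTop (nhds (V a₂ - V a₁)) ∧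
      (∀ t₁ ∈ Set.Ioi a₂, ∀ t₂ ∈ Set.Ioi a₂,
        lam a₂ t₁ - lam a₁ t₁ = 0 → lam a₂ t₂ - lam a₁ t₂ = 0 → t₁ = t₂) ∧
      ((∃ t ∈ Set.Ioi a₂, lam a₂ t - lam a₁ t = 0) ↔ V a₁ < V a₂)) := by
  obtain rfl : lam = catenaryLambda := funext₂ hlam
  obtain rfl : V = catenaryHeight := funext hV
  refine ⟨fun a ha => ⟨fun t _ => (integrableOn_Ioi_catenaryIntegrand ha).mono_set
    Ioc_subset_Ioi_self, integrableOn_Ioi_catenaryIntegrand ha, tendsto_catenaryLambda_atTop ha⟩,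
    fun a₁ a₂ h₁ h₁₂ => ?_⟩
  have h₂ : 0 < a₂ := h₁.trans h₁₂
  have hmono := strictMonoOn_catenaryLambda_sub h₁ h₁₂
  have hstart : catenaryLambda a₂ a₂ - catenaryLambda a₁ a₂ = -catenaryLambda a₁ a₂ := by
    simp [catenaryLambda]
  have hpos := catenaryLambda_pos h₁ h₁₂
  have hlim := (tendsto_catenaryLambda_atTop h₂).sub (tendsto_catenaryLambda_atTop h₁)
  have hcont := (continuousOn_catenaryLambda h₂).sub
    ((continuousOn_catenaryLambda h₁).mono (Ici_subset_Ici.2 h₁₂.le))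
  refine ⟨hmono, hstart, hpos, hlim, fun t₁ ht₁ t₂ ht₂ hz₁ hz₂ =>
    hmono.injOn (Ioi_subset_Ici_self ht₁) (Ioi_subset_Ici_self ht₂) (hz₁.trans hz₂.symm), ?_⟩
  rw [hmono.exists_eq_zero_iff_pos hcont (by linarith) hlim, sub_pos]
end

section
/- For a > 0, let y₁(a,s) = a + ∫₀^s 2e^{−2a}·t·((2e^{−2a}·t² + cosh(2a))² − 1)^{−1/2} dt and Λ₁(a,s) = ∫₀^s e^{a}·(2t² + e^{2a}·sinh(2a)) / (2·(t² + e^{2a}·cosh²(a))·(t² + e^{2a}·sinh²(a))^{1/2}) dt, and define e₁(a,s) = cosh(y₁(a,s))·( ∂Λ₁/∂a(a,s)·∂y₁/∂s(a,s) − ∂Λ₁/∂s(a,s)·∂y₁/∂a(a,s) ). Then e₁(a,·) is a smooth even function of s with e₁(a,0) = −1, e₁(a,s) → +∞ as s → ∞, and e₁(a,·) has exactly one zero z₁(a) in the open interval (0, ∞). -/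
open Real MeasureTheory Set Filter Topology

/-!
Both integrands have elementary primitives. With `β = eᵇ sinh b` and `α = eᵇ cosh b`, so that
`α - β = 1` and `α² - β² = e²ᵇ`,
`y₁(b,s) = arsinh (√(s² + β²) / eᵇ)` and
`Λ₁(b,s) = eᵇ arsinh (s / β) - arsinh (eᵇ s / (β √(s² + α²)))`.
Differentiating these closed forms, the variation field collapses to `e₁(a,s) = u tanh u - 1`
with `u = arsinh (s / β(a))`. Since `u ↦ u tanh u - 1` is even, equals `-1` at `0`, increases
strictly on `[0, ∞)` and tends to `+∞`, the intermediate value theorem gives exactly one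
positive zero.
-/

namespace Real

lemma contDiff_tanh {n : WithTop ℕ∞} : ContDiff ℝ n tanh := by
  simp only [funext tanh_eq_sinh_div_cosh]
  exact contDiff_sinh.div contDiff_cosh fun x => (cosh_pos x).ne'

lemma tanh_nonneg {u : ℝ} (hu : 0 ≤ u) : 0 ≤ tanh u := by
  rw [tanh_eq_sinh_div_cosh]
  exact div_nonneg (sinh_nonneg_iff.2 hu) (cosh_pos u).le

lemma tanh_pos {u : ℝ} (hu : 0 < u) : 0 < tanh u := by
  rw [tanh_eq_sinh_div_cosh]
  exact div_pos (sinh_pos_iff.2 hu) (cosh_pos u)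

lemma tanh_strictMono : StrictMono tanh := fun u v huv => by
  by_contra! h
  have := artanh_le_artanh (neg_one_lt_tanh v) (tanh_lt_one u) h
  rw [artanh_tanh, artanh_tanh] at this
  exact this.not_gt huv

lemma tendsto_arsinh_atTop : Tendsto arsinh atTop atTop :=
  tendsto_atTop_atTop_of_monotone arsinh_strictMono.monotone fun x => ⟨sinh x, (arsinh_sinh x).ge⟩

end Real

lemma sqrt_one_add_div_sq {x y z : ℝ} (hy : 0 < y) (hz : 0 ≤ z) (h : y ^ 2 + x ^ 2 = z ^ 2) :
    √(1 + (x / y) ^ 2) = z / y := by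
  rw [show 1 + (x / y) ^ 2 = (z / y) ^ 2 by field_simp; linarith, sqrt_sq (by positivity)]

lemma rpow_neg_half_sq {x : ℝ} (hx : 0 < x) : (x ^ 2) ^ (-(1 : ℝ) / 2) = x⁻¹ := by
  rw [← rpow_natCast, ← rpow_mul hx.le]
  norm_num [rpow_neg_one]

lemma exists_pos_root_unique_of_strictMonoOn {f : ℝ → ℝ} (hf : ContinuousOn f (Ici 0))
    (hmono : StrictMonoOn f (Ici 0)) (h0 : f 0 < 0) (htop : Tendsto f atTop atTop) :
    ∃ z, 0 < z ∧ f z = 0 ∧ ∀ s, 0 < s → f s = 0 → s = z := by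
  obtain ⟨T, hT, hfT⟩ := ((eventually_ge_atTop 0).and (htop.eventually_gt_atTop 0)).exists
  obtain ⟨z, hz, hfz⟩ := intermediate_value_Ioo hT (hf.mono Icc_subset_Ici_self) ⟨h0, hfT⟩
  exact ⟨z, hz.1, hfz, fun s hs hfs => hmono.injOn hs.le hz.1.le (hfs.trans hfz.symm)⟩

noncomputable def jacobiProfile (u : ℝ) : ℝ := u * tanh u - 1

lemma contDiff_jacobiProfile {n : WithTop ℕ∞} : ContDiff ℝ n jacobiProfile :=
  (contDiff_id.mul contDiff_tanh).sub contDiff_const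

lemma jacobiProfile_neg (u : ℝ) : jacobiProfile (-u) = jacobiProfile u := by
  rw [jacobiProfile, jacobiProfile, tanh_neg, neg_mul_neg]

lemma jacobiProfile_zero : jacobiProfile 0 = -1 := by
  rw [jacobiProfile, zero_mul, zero_sub]

lemma strictMonoOn_jacobiProfile : StrictMonoOn jacobiProfile (Ici 0) := fun _ hu _ _ huv =>
  sub_lt_sub_right (mul_lt_mul'' huv (tanh_strictMono huv) hu (tanh_nonneg hu)) 1

lemma tendsto_jacobiProfile_atTop : Tendsto jacobiProfile atTop atTop := by
  refine tendsto_atTop_mono' atTop ?_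
    (tendsto_atTop_add_const_right _ (-1) (tendsto_id.atTop_mul_const (tanh_pos one_pos)))
  filter_upwards [eventually_ge_atTop 1] with u hu
  rw [jacobiProfile, sub_eq_add_neg, id]
  gcongr
  exact tanh_strictMono.monotone hu

noncomputable def jacobiField (c s : ℝ) : ℝ := jacobiProfile (arsinh (s / c))

lemma contDiff_jacobiField {c : ℝ} {n : WithTop ℕ∞} : ContDiff ℝ n (jacobiField c) :=
  contDiff_jacobiProfile.comp (contDiff_arsinh.comp (contDiff_id.div_const c))

lemma jacobiField_neg (c s : ℝ) : jacobiField c (-s) = jacobiField c s := by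
  rw [jacobiField, jacobiField, neg_div, arsinh_neg, jacobiProfile_neg]

lemma jacobiField_zero (c : ℝ) : jacobiField c 0 = -1 := by
  rw [jacobiField, zero_div, arsinh_zero, jacobiProfile_zero]

lemma tendsto_jacobiField_atTop {c : ℝ} (hc : 0 < c) : Tendsto (jacobiField c) atTop atTop :=
  tendsto_jacobiProfile_atTop.comp (tendsto_arsinh_atTop.comp (tendsto_id.atTop_div_const hc))

lemma strictMonoOn_jacobiField {c : ℝ} (hc : 0 < c) : StrictMonoOn (jacobiField c) (Ici 0) :=
  strictMonoOn_jacobiProfile.comp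
    ((arsinh_strictMono.comp (strictMono_div_right_of_pos hc)).strictMonoOn _)
    fun _ hs => arsinh_nonneg_iff.2 (div_nonneg hs hc.le)

noncomputable def variationField (y Λ : ℝ → ℝ → ℝ) (b s : ℝ) : ℝ :=
  cosh (y b s) *
    (deriv (fun b => Λ b s) b * deriv (y b) s - deriv (Λ b) s * deriv (fun b => y b s) b)

lemma variationField_congr {y y' Λ Λ' : ℝ → ℝ → ℝ} {a : ℝ}
    (h : ∀ᶠ b in 𝓝 a, y b = y' b ∧ Λ b = Λ' b) (s : ℝ) :
    variationField y Λ a s = variationField y' Λ' a s := by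
  have hy : (fun b => y b s) =ᶠ[𝓝 a] fun b => y' b s := h.mono fun b hb => congrFun hb.1 s
  have hΛ : (fun b => Λ b s) =ᶠ[𝓝 a] fun b => Λ' b s := h.mono fun b hb => congrFun hb.2 s
  obtain ⟨hya, hΛa⟩ := h.self_of_nhds
  rw [variationField, variationField, hy.deriv_eq, hΛ.deriv_eq, hya, hΛa]

noncomputable def eSinh (b : ℝ) : ℝ := exp b * sinh b

noncomputable def eCosh (b : ℝ) : ℝ := exp b * cosh b

section

variable {b : ℝ}

lemma eSinh_pos (hb : 0 < b) : 0 < eSinh b := mul_pos (exp_pos b) (sinh_pos_iff.2 hb)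

lemma eCosh_pos (b : ℝ) : 0 < eCosh b := mul_pos (exp_pos b) (cosh_pos b)

lemma eCosh_sub_eSinh (b : ℝ) : eCosh b - eSinh b = 1 := by
  rw [eCosh, eSinh, ← mul_sub, cosh_sub_sinh, ← exp_add, add_neg_cancel, exp_zero]

lemma eCosh_eq_eSinh_add_one (b : ℝ) : eCosh b = eSinh b + 1 := by
  linear_combination eCosh_sub_eSinh b

lemma eCosh_sq_sub_eSinh_sq (b : ℝ) : eCosh b ^ 2 - eSinh b ^ 2 = exp b ^ 2 := by
  rw [eCosh, eSinh, mul_pow, mul_pow, ← mul_sub, cosh_sq_sub_sinh_sq, mul_one]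

lemma exp_sq_eq_two_mul_eSinh_add_one (b : ℝ) : exp b ^ 2 = 2 * eSinh b + 1 := by
  linear_combination (-1 : ℝ) * eCosh_sq_sub_eSinh_sq b + (eCosh b + eSinh b + 1) * eCosh_sub_eSinh b

lemma hasDerivAt_eSinh (b : ℝ) : HasDerivAt eSinh (exp b ^ 2) b :=
  ((hasDerivAt_exp b).mul (hasDerivAt_sinh b)).congr_deriv <| by
    rw [← mul_add, sinh_add_cosh, sq]

lemma hasDerivAt_eCosh (b : ℝ) : HasDerivAt eCosh (exp b ^ 2) b :=
  ((hasDerivAt_exp b).mul (hasDerivAt_cosh b)).congr_deriv <| by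
    rw [← mul_add, cosh_add_sinh, sq]

noncomputable def catenaryY (b s : ℝ) : ℝ := arsinh (√(s ^ 2 + eSinh b ^ 2) / exp b)

noncomputable def catenaryΛ (b s : ℝ) : ℝ :=
  exp b * arsinh (s / eSinh b) - arsinh (exp b * s / (eSinh b * √(s ^ 2 + eCosh b ^ 2)))

lemma catenaryY_zero (hb : 0 ≤ b) : catenaryY b 0 = b := by
  rw [catenaryY, eSinh, zero_pow two_ne_zero, zero_add, sqrt_sq (mul_nonneg (exp_pos b).le
    (sinh_nonneg_iff.2 hb)), mul_div_cancel_left₀ _ (exp_pos b).ne', arsinh_sinh]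

lemma catenaryΛ_zero (b : ℝ) : catenaryΛ b 0 = 0 := by
  simp [catenaryΛ]

lemma sqrt_one_add_catenary_sq (b s : ℝ) :
    √(1 + (√(s ^ 2 + eSinh b ^ 2) / exp b) ^ 2) = √(s ^ 2 + eCosh b ^ 2) / exp b := by
  refine sqrt_one_add_div_sq (exp_pos b) (sqrt_nonneg _) ?_
  rw [sq_sqrt (by positivity), sq_sqrt (by positivity)]
  linarith [eCosh_sq_sub_eSinh_sq b]

lemma cosh_catenaryY (b s : ℝ) : cosh (catenaryY b s) = √(s ^ 2 + eCosh b ^ 2) / exp b := by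
  rw [catenaryY, cosh_arsinh, sqrt_one_add_catenary_sq]

lemma hasDerivAt_catenaryY (hb : 0 < b) (s : ℝ) :
    HasDerivAt (catenaryY b) (s / (√(s ^ 2 + eSinh b ^ 2) * √(s ^ 2 + eCosh b ^ 2))) s := by
  have hβ := eSinh_pos hb
  have hR : 0 < √(s ^ 2 + eSinh b ^ 2) := by positivity
  have h := ((((hasDerivAt_pow 2 s).add_const (eSinh b ^ 2)).sqrt (by positivity)).div_const
    (exp b)).arsinh
  refine h.congr_deriv ?_
  rw [sqrt_one_add_catenary_sq, smul_eq_mul]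
  have hA : 0 < √(s ^ 2 + eCosh b ^ 2) := by have := eCosh_pos b; positivity
  field_simp
  push_cast
  ring

lemma hasDerivAt_catenaryΛ (hb : 0 < b) (s : ℝ) :
    HasDerivAt (catenaryΛ b) (exp b * (s ^ 2 + eCosh b * eSinh b) /
      ((s ^ 2 + eCosh b ^ 2) * √(s ^ 2 + eSinh b ^ 2))) s := by
  have hβ := eSinh_pos hb
  have hα := eCosh_pos b
  set R := √(s ^ 2 + eSinh b ^ 2) with hR
  set A := √(s ^ 2 + eCosh b ^ 2) with hA
  have hR0 : 0 < R := by positivity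
  have hA0 : 0 < A := by positivity
  have hR2 : R ^ 2 = s ^ 2 + eSinh b ^ 2 := sq_sqrt (by positivity)
  have hA2 : A ^ 2 = s ^ 2 + eCosh b ^ 2 := sq_sqrt (by positivity)
  have hsqrtA := ((hasDerivAt_pow 2 s).add_const (eCosh b ^ 2)).sqrt (by positivity)
  have h := (((hasDerivAt_id s).div_const (eSinh b)).arsinh.const_mul (exp b)).sub
    ((((hasDerivAt_id s).const_mul (exp b)).div (hsqrtA.const_mul (eSinh b))
      (by positivity)).arsinh)
  refine h.congr_deriv ?_
  simp only [id, smul_eq_mul, Pi.div_apply, ← hA]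
  have hsq : (eSinh b * A) ^ 2 + (exp b * s) ^ 2 = (eCosh b * R) ^ 2 := by
    rw [mul_pow, mul_pow, mul_pow, hR2, hA2]
    linear_combination (-s ^ 2) * eCosh_sq_sub_eSinh_sq b
  rw [sqrt_one_add_div_sq hβ hR0.le (by rw [hR2]; ring),
    sqrt_one_add_div_sq (by positivity) (mul_nonneg hα.le hR0.le) hsq]
  field_simp
  push_cast
  rw [hA2, eCosh_eq_eSinh_add_one]
  ring

lemma hasDerivAt_catenaryY_param (hb : 0 < b) (s : ℝ) :
    HasDerivAt (fun b => catenaryY b s) ((eCosh b * eSinh b - s ^ 2) /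
      (√(s ^ 2 + eSinh b ^ 2) * √(s ^ 2 + eCosh b ^ 2))) b := by
  have hβ := eSinh_pos hb
  have hα := eCosh_pos b
  have hE := exp_pos b
  have hR2 : √(s ^ 2 + eSinh b ^ 2) ^ 2 = s ^ 2 + eSinh b ^ 2 := sq_sqrt (by positivity)
  have hR := (((hasDerivAt_eSinh b).fun_pow 2).const_add (s ^ 2)).sqrt
    (by positivity : s ^ 2 + eSinh b ^ 2 ≠ 0)
  have h := (hR.div (hasDerivAt_exp b) hE.ne').arsinh
  refine h.congr_deriv ?_
  rw [Pi.div_apply, sqrt_one_add_catenary_sq, smul_eq_mul]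
  field_simp
  push_cast
  linear_combination (2 * eSinh b) * exp_sq_eq_two_mul_eSinh_add_one b - 2 * hR2
    - 2 * eSinh b * eCosh_sub_eSinh b

lemma hasDerivAt_catenaryΛ_param (hb : 0 < b) (s : ℝ) :
    HasDerivAt (fun b => catenaryΛ b s) (exp b * arsinh (s / eSinh b) -
      exp b * s * (2 * s ^ 2 + eCosh b ^ 2 + eSinh b ^ 2) /
        ((s ^ 2 + eCosh b ^ 2) * √(s ^ 2 + eSinh b ^ 2))) b := by
  have hβ := eSinh_pos hb
  have hα := eCosh_pos b
  set R := √(s ^ 2 + eSinh b ^ 2) with hR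
  set A := √(s ^ 2 + eCosh b ^ 2) with hA
  have hR0 : 0 < R := by positivity
  have hA0 : 0 < A := by positivity
  have hR2 : R ^ 2 = s ^ 2 + eSinh b ^ 2 := sq_sqrt (by positivity)
  have hA2 : A ^ 2 = s ^ 2 + eCosh b ^ 2 := sq_sqrt (by positivity)
  have hsqrtA := (((hasDerivAt_eCosh b).fun_pow 2).const_add (s ^ 2)).sqrt
    (by positivity : s ^ 2 + eCosh b ^ 2 ≠ 0)
  have h := ((hasDerivAt_exp b).mul ((hasDerivAt_const b s).fun_div (hasDerivAt_eSinh b)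
    hβ.ne').arsinh).sub ((((hasDerivAt_exp b).mul_const s).fun_div
      ((hasDerivAt_eSinh b).fun_mul hsqrtA) (by positivity)).arsinh)
  refine h.congr_deriv ?_
  simp only [smul_eq_mul, ← hA]
  have hsq : (eSinh b * A) ^ 2 + (exp b * s) ^ 2 = (eCosh b * R) ^ 2 := by
    rw [mul_pow, mul_pow, mul_pow, hR2, hA2]
    linear_combination (-s ^ 2) * eCosh_sq_sub_eSinh_sq b
  rw [sqrt_one_add_div_sq hβ hR0.le (by rw [hR2]; ring),
    sqrt_one_add_div_sq (by positivity) (mul_nonneg hα.le hR0.le) hsq]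
  field_simp
  push_cast
  rw [hA2, eCosh_eq_eSinh_add_one, exp_sq_eq_two_mul_eSinh_add_one]
  ring

lemma y_integrand_eq (hb : 0 < b) (t : ℝ) :
    2 * exp (-2 * b) * t * ((2 * exp (-2 * b) * t ^ 2 + cosh (2 * b)) ^ 2 - 1) ^ (-(1 : ℝ) / 2)
      = t / (√(t ^ 2 + eSinh b ^ 2) * √(t ^ 2 + eCosh b ^ 2)) := by
  have hβ := eSinh_pos hb
  have hα := eCosh_pos b
  have hE := exp_pos b
  set R := √(t ^ 2 + eSinh b ^ 2) with hR
  set A := √(t ^ 2 + eCosh b ^ 2) with hA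
  have hR2 : R ^ 2 = t ^ 2 + eSinh b ^ 2 := sq_sqrt (by positivity)
  have hA2 : A ^ 2 = t ^ 2 + eCosh b ^ 2 := sq_sqrt (by positivity)
  have hexp : exp (-2 * b) = (exp b ^ 2)⁻¹ := by rw [neg_mul, exp_neg, two_mul, exp_add, sq]
  have hw : (2 * exp (-2 * b) * t ^ 2 + cosh (2 * b)) ^ 2 - 1 = (2 * R * A / exp b ^ 2) ^ 2 := by
    have hcosh : cosh (2 * b) = 1 + 2 * (eSinh b / exp b) ^ 2 := by
      rw [cosh_two_mul, cosh_sq, eSinh, mul_div_cancel_left₀ _ hE.ne']; ring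
    rw [hexp, hcosh]
    field_simp
    rw [hR2, hA2]
    linear_combination (-4 * (t ^ 2 + eSinh b ^ 2)) * eCosh_sq_sub_eSinh_sq b
  rw [hw, rpow_neg_half_sq (by positivity), hexp]
  field_simp

lemma Λ_integrand_eq (b t : ℝ) :
    exp b * (2 * t ^ 2 + exp (2 * b) * sinh (2 * b))
        / (2 * (t ^ 2 + exp (2 * b) * cosh b ^ 2) * √(t ^ 2 + exp (2 * b) * sinh b ^ 2))
      = exp b * (t ^ 2 + eCosh b * eSinh b) / ((t ^ 2 + eCosh b ^ 2) * √(t ^ 2 + eSinh b ^ 2)) := by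
  have hexp : exp (2 * b) = exp b ^ 2 := by rw [sq, ← exp_add, two_mul]
  rw [hexp, sinh_two_mul, eCosh, eSinh, mul_pow, mul_pow]
  field_simp

lemma integral_y_integrand_eq (hb : 0 < b) (s : ℝ) :
    b + ∫ t in (0 : ℝ)..s, 2 * exp (-2 * b) * t *
      ((2 * exp (-2 * b) * t ^ 2 + cosh (2 * b)) ^ 2 - 1) ^ (-(1 : ℝ) / 2) = catenaryY b s := by
  have hβ := eSinh_pos hb
  have hα := eCosh_pos b
  have hcont : Continuous fun t : ℝ => t / (√(t ^ 2 + eSinh b ^ 2) * √(t ^ 2 + eCosh b ^ 2)) :=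
    continuous_id.div (by fun_prop) fun t => by positivity
  simp_rw [y_integrand_eq hb]
  rw [intervalIntegral.integral_eq_sub_of_hasDerivAt (fun t _ => hasDerivAt_catenaryY hb t)
    (hcont.intervalIntegrable 0 s), catenaryY_zero hb.le, add_sub_cancel]

lemma integral_Λ_integrand_eq (hb : 0 < b) (s : ℝ) :
    ∫ t in (0 : ℝ)..s, exp b * (2 * t ^ 2 + exp (2 * b) * sinh (2 * b))
        / (2 * (t ^ 2 + exp (2 * b) * cosh b ^ 2) * √(t ^ 2 + exp (2 * b) * sinh b ^ 2))
      = catenaryΛ b s := by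
  have hβ := eSinh_pos hb
  have hα := eCosh_pos b
  have hcont : Continuous fun t : ℝ => exp b * (t ^ 2 + eCosh b * eSinh b) /
      ((t ^ 2 + eCosh b ^ 2) * √(t ^ 2 + eSinh b ^ 2)) :=
    (by fun_prop : Continuous _).div (by fun_prop) fun t => by positivity
  simp_rw [Λ_integrand_eq b]
  rw [intervalIntegral.integral_eq_sub_of_hasDerivAt (fun t _ => hasDerivAt_catenaryΛ hb t)
    (hcont.intervalIntegrable 0 s), catenaryΛ_zero, sub_zero]

lemma variationField_catenary (hb : 0 < b) (s : ℝ) :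
    variationField catenaryY catenaryΛ b s = jacobiField (eSinh b) s := by
  have hβ := eSinh_pos hb
  have hα := eCosh_pos b
  rw [variationField, (hasDerivAt_catenaryΛ_param hb s).deriv,
    (hasDerivAt_catenaryY hb s).deriv, (hasDerivAt_catenaryΛ hb s).deriv,
    (hasDerivAt_catenaryY_param hb s).deriv,
    cosh_catenaryY, jacobiField, jacobiProfile, tanh_arsinh]
  set R := √(s ^ 2 + eSinh b ^ 2) with hR
  set A := √(s ^ 2 + eCosh b ^ 2) with hA
  have hR0 : 0 < R := by positivity
  have hA0 : 0 < A := by positivity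
  have hR2 : R ^ 2 = s ^ 2 + eSinh b ^ 2 := sq_sqrt (by positivity)
  have hA2 : A ^ 2 = s ^ 2 + eCosh b ^ 2 := sq_sqrt (by positivity)
  rw [sqrt_one_add_div_sq hβ hR0.le (by rw [hR2]; ring), ← hA2]
  field_simp
  linear_combination A ^ 2 * hR2 + (s ^ 2 + eSinh b ^ 2) * hA2

end

/-- The variation Jacobi field `e₁(a,s) = cosh(y₁)·(∂_a Λ₁ ∂_s y₁ − ∂_s Λ₁ ∂_a y₁)` on the
embedded catenoid cousin `𝒞_{1,a}` in `ℍ³(−1)` is smooth, even, takes the value `−1` at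
`s = 0`, tends to `+∞` at infinity, and has exactly one zero `z₁(a)` in `(0, ∞)`. -/
theorem stmt19 (a : ℝ) (ha : 0 < a)
    (y₁ Λ₁ : ℝ → ℝ → ℝ) (e₁ : ℝ → ℝ)
    (hy : ∀ b s, y₁ b s = b + ∫ t in (0:ℝ)..s,
      2 * Real.exp (-2*b) * t *
        ((2 * Real.exp (-2*b) * t ^ 2 + Real.cosh (2*b)) ^ 2 - 1) ^ (-(1:ℝ)/2))
    (hΛ : ∀ b s, Λ₁ b s = ∫ t in (0:ℝ)..s,
      Real.exp b * (2 * t ^ 2 + Real.exp (2*b) * Real.sinh (2*b))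
        / (2 * (t ^ 2 + Real.exp (2*b) * Real.cosh b ^ 2)
            * Real.sqrt (t ^ 2 + Real.exp (2*b) * Real.sinh b ^ 2)))
    (he : ∀ s, e₁ s = Real.cosh (y₁ a s) *
      (deriv (fun b => Λ₁ b s) a * deriv (y₁ a) s
        - deriv (Λ₁ a) s * deriv (fun b => y₁ b s) a)) :
    ContDiff ℝ (⊤ : ℕ∞) e₁ ∧ (∀ s, e₁ (-s) = e₁ s) ∧ e₁ 0 = -1 ∧
    Filter.Tendsto e₁ Filter.atTop Filter.atTop ∧
    ∃ z : ℝ, 0 < z ∧ e₁ z = 0 ∧ ∀ s, 0 < s → e₁ s = 0 → s = z := by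
  have hfamily : ∀ᶠ b in 𝓝 a, y₁ b = catenaryY b ∧ Λ₁ b = catenaryΛ b :=
    (lt_mem_nhds ha).mono fun b hb => ⟨funext fun s => (hy b s).trans (integral_y_integrand_eq hb s),
      funext fun s => (hΛ b s).trans (integral_Λ_integrand_eq hb s)⟩
  have he₁ : e₁ = jacobiField (eSinh a) := funext fun s =>
    (he s).trans ((variationField_congr hfamily s).trans (variationField_catenary ha s))
  subst he₁
  have hβ := eSinh_pos ha
  refine ⟨contDiff_jacobiField, jacobiField_neg _, jacobiField_zero _, tendsto_jacobiField_atTop hβ,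
    exists_pos_root_unique_of_strictMonoOn (contDiff_jacobiField (n := 0)).continuous.continuousOn
      (strictMonoOn_jacobiField hβ) ?_ (tendsto_jacobiField_atTop hβ)⟩
  rw [jacobiField_zero]
  norm_num
end
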